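/- Suppose the Coxeter group W associated to the E-GCM graph (Γ,M) is finite, let J ⊆ I_n, and suppose every element of W^J is fully commutative. Then every J^c-dominant position is adjacency-free. -/

import Mathlib

/-- An E-generalized Cartan matrix (E-GCM) on a finite index type `ι`. -/
structure EGCM (ι : Type*) [Fintype ι] where
  /-- the matrix of amplitudes -/
  M : ι → ι → ℝ
  diag : ∀ i, M i i = 2
  offDiag_nonpos : ∀ i j, i ≠ j → M i j ≤ 0
  zero_iff : ∀ i j, M i j = 0 ↔ M j i = 0
  prod_cond : ∀ i j, i ≠ j → M i j * M j i ≠ 0 →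
    4 ≤ M i j * M j i ∨
      ∃ k : ℕ, 3 ≤ k ∧ M i j * M j i = 4 * Real.cos (Real.pi / k) ^ 2

namespace EGCM

variable {ι : Type*} [Fintype ι]

/-- Adjacency in the E-GCM graph. -/
def Adj (E : EGCM ι) (i j : ι) : Prop := i ≠ j ∧ E.M i j ≠ 0

/-- The underlying simple graph of an E-GCM graph. -/
def graph (E : EGCM ι) : SimpleGraph ι where
  Adj i j := i ≠ j ∧ E.M i j ≠ 0
  symm := by
    constructor
    intro i j ⟨h1, h2⟩
    exact ⟨h1.symm, fun hz => h2 ((E.zero_iff j i).mp hz)⟩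
  loopless := by constructor; intro i ⟨h, _⟩; exact h rfl

/-- The result of firing node `i` from position `lam`. -/
def fire (E : EGCM ι) (lam : ι → ℝ) (i : ι) : ι → ℝ := fun j => lam j - E.M i j * lam i

/-- The position resulting from firing the nodes in the list `s` in order. -/
def fireList (E : EGCM ι) (lam : ι → ℝ) : List ι → (ι → ℝ)
  | [] => lam
  | i :: s => fireList E (E.fire lam i) s

/-- The firing sequence `s` is legal from position `lam`: at each step the
fired node carries a positive number. -/
def Legal (E : EGCM ι) (lam : ι → ℝ) : List ι → Prop
  | [] => True
  | i :: s => 0 < lam i ∧ Legal E (E.fire lam i) s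

/-- A position with no positive entries. -/
def Terminal (lam : ι → ℝ) : Prop := ∀ i, lam i ≤ 0

/-- `s` is a (convergent) game sequence from `lam`: a legal firing sequence whose
resulting position has no positive entries. -/
def IsGameSeq (E : EGCM ι) (lam : ι → ℝ) (s : List ι) : Prop :=
  E.Legal lam s ∧ Terminal (E.fireList lam s)

/-- The position after `k` steps of the infinite firing sequence `f`. -/
def posAt (E : EGCM ι) (lam : ι → ℝ) (f : ℕ → ι) : ℕ → (ι → ℝ)
  | 0 => lam
  | k + 1 => E.fire (posAt E lam f k) (f k)

/-- `f` is a divergent game sequence from `lam`: an infinite sequence of legal firings. -/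
def DivergentSeq (E : EGCM ι) (lam : ι → ℝ) (f : ℕ → ι) : Prop :=
  ∀ k, 0 < E.posAt lam f k (f k)

/-- A dominant position: all numbers nonnegative. -/
def Dominant (lam : ι → ℝ) : Prop := ∀ i, 0 ≤ lam i

/-- A strongly dominant position: all numbers positive. -/
def StronglyDominant (lam : ι → ℝ) : Prop := ∀ i, 0 < lam i

/-- The E-GCM graph is admissible if some nonzero dominant position has a
convergent game sequence. -/
def Admissible (E : EGCM ι) : Prop :=
  ∃ lam : ι → ℝ, Dominant lam ∧ lam ≠ 0 ∧ ∃ s : List ι, E.IsGameSeq lam s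

/-- The E-GCM graph is strongly admissible if every nonzero dominant position has a
convergent game sequence. -/
def StronglyAdmissible (E : EGCM ι) : Prop :=
  ∀ lam : ι → ℝ, Dominant lam → lam ≠ 0 → ∃ s : List ι, E.IsGameSeq lam s

/-- A position is adjacency-free if no position reachable from it by a legal firing
sequence (i.e. no intermediate position of a game sequence) has positive numbers at
two adjacent nodes. -/
def AdjacencyFree (E : EGCM ι) (lam : ι → ℝ) : Prop :=
  ∀ s : List ι, E.Legal lam s →
    ¬ ∃ i j, E.Adj i j ∧ 0 < E.fireList lam s i ∧ 0 < E.fireList lam s j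

/-- A `J`-complement-dominant position: zero exactly at the nodes of `J`, positive elsewhere. -/
def JcDominant (J : Set ι) (lam : ι → ℝ) : Prop :=
  (∀ j ∈ J, lam j = 0) ∧ ∀ i ∉ J, 0 < lam i

open Classical in
/-- The Coxeter exponent `m i j` attached to the E-GCM: `m i j = k` if
`M i j * M j i = 4 cos²(π/k)` with `k ≥ 2`, and `m i j = 0` (representing `∞`)
if `M i j * M j i ≥ 4`. -/
noncomputable def m (E : EGCM ι) (i j : ι) : ℕ :=
  if i = j then 1
  else if h : ∃ k : ℕ, 2 ≤ k ∧ E.M i j * E.M j i = 4 * Real.cos (Real.pi / k) ^ 2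
    then Nat.find h else 0

theorem m_symm (E : EGCM ι) (i j : ι) : E.m i j = E.m j i := by
  unfold m
  rcases eq_or_ne i j with rfl | hij
  · simp
  · rw [if_neg hij, if_neg (Ne.symm hij)]
    by_cases h : ∃ k : ℕ, 2 ≤ k ∧ E.M i j * E.M j i = 4 * Real.cos (Real.pi / k) ^ 2
    · have h' : ∃ k : ℕ, 2 ≤ k ∧ E.M j i * E.M i j = 4 * Real.cos (Real.pi / k) ^ 2 := by
        rw [mul_comm]; exact h
      rw [dif_pos h, dif_pos h']
      exact le_antisymm (Nat.find_mono fun n hn => by rwa [mul_comm (E.M i j)])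
        (Nat.find_mono fun n hn => by rwa [mul_comm (E.M j i)])
    · have h' : ¬ ∃ k : ℕ, 2 ≤ k ∧ E.M j i * E.M i j = 4 * Real.cos (Real.pi / k) ^ 2 := by
        rw [mul_comm]; exact h
      rw [dif_neg h, dif_neg h']

theorem m_offDiag (E : EGCM ι) (i j : ι) (h : i ≠ j) : E.m i j ≠ 1 := by
  classical
  unfold m
  rw [if_neg h]
  split
  · rename_i hex
    have := Nat.find_spec hex
    omega
  · omega

/-- The Coxeter matrix associated to the E-GCM. -/
noncomputable def cox (E : EGCM ι) : CoxeterMatrix ι where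
  M := fun i j => E.m i j
  isSymm := by
    ext i j
    exact E.m_symm j i
  diagonal := by intro i; simp [m]
  off_diagonal := fun i j h => E.m_offDiag i j h

/-- The reflection `S i` of the geometric representation:
`S i v = v − 2 B(α i, v) • α i` where `B (α i, α j) = M i j / 2`. -/
noncomputable def S [DecidableEq ι] (E : EGCM ι) (i : ι) : Module.End ℝ (ι → ℝ) :=
  LinearMap.id -
    LinearMap.smulRight
      ((∑ k, E.M i k • LinearMap.proj k : (ι → ℝ) →ₗ[ℝ] ℝ)) (Pi.single i 1)

end EGCM

section Roots

variable {ι : Type*} [Fintype ι] [DecidableEq ι]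
variable {W : Type*} [Group W]

/-- `α` is a root for the geometric representation `σ`. -/
def IsRoot (σ : W →* Module.End ℝ (ι → ℝ)) (α : ι → ℝ) : Prop :=
  ∃ (w : W) (i : ι), σ w (Pi.single i 1) = α

/-- `α` is a positive root. -/
def IsPosRoot (σ : W →* Module.End ℝ (ι → ℝ)) (α : ι → ℝ) : Prop :=
  IsRoot σ α ∧ ∀ i, 0 ≤ α i

/-- `α` is a negative root. -/
def IsNegRoot (σ : W →* Module.End ℝ (ι → ℝ)) (α : ι → ℝ) : Prop :=
  IsRoot σ α ∧ ∀ i, α i ≤ 0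

/-- `N_M(w)`: the set of positive roots sent to negative roots by `w`. -/
def NM (σ : W →* Module.End ℝ (ι → ℝ)) (w : W) : Set (ι → ℝ) :=
  {α | IsPosRoot σ α ∧ IsNegRoot σ (σ w α)}

/-- `𝔖_M(α)`: the positive roots which are real multiples of `α`. -/
def Sfrak (σ : W →* Module.End ℝ (ι → ℝ)) (α : ι → ℝ) : Set (ι → ℝ) :=
  {β | (∃ K : ℝ, β = K • α) ∧ IsPosRoot σ β}

end Roots

section Parabolic

variable {ι : Type*} {W : Type*} [Group W]

/-- The standard parabolic subgroup `W_J`. -/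
def parabolic {M : CoxeterMatrix ι} (cs : CoxeterSystem M W) (J : Set ι) : Subgroup W :=
  Subgroup.closure (cs.simple '' J)

/-- The set `W^J` of minimal coset representatives. -/
def minReps {M : CoxeterMatrix ι} (cs : CoxeterSystem M W) (J : Set ι) : Set W :=
  {w | ∀ j ∈ J, cs.length w < cs.length (w * cs.simple j)}

end Parabolic

namespace EGCM

variable {ι : Type*} [Fintype ι]

/-- The E-GCM subgraph induced on a subset `I` of the nodes. -/
def restrict (E : EGCM ι) (I : Finset ι) : EGCM {x // x ∈ I} where
  M i j := E.M i j
  diag i := E.diag i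
  offDiag_nonpos i j h := E.offDiag_nonpos i j (fun hc => h (Subtype.ext hc))
  zero_iff i j := E.zero_iff i j
  prod_cond i j h := E.prod_cond i j (fun hc => h (Subtype.ext hc))

/-- Adjacent nodes `i`, `j` are odd-neighborly if `m i j` is odd. -/
def OddNeighborly (E : EGCM ι) (i j : ι) : Prop := E.Adj i j ∧ Odd (E.m i j)

/-- The factor `K_{j i} = −(M j i) / (2 cos (π / m i j))` attached to an
odd-neighborly pair `(i, j)`. -/
noncomputable def Kfac (E : EGCM ι) (i j : ι) : ℝ :=
  -E.M j i / (2 * Real.cos (Real.pi / (E.m i j : ℝ)))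

/-- `Π_P` for the ON-path `P` given by a list of nodes: the product of the factors
`K` along consecutive pairs. -/
noncomputable def piON (E : EGCM ι) : List ι → ℝ
  | [] => 1
  | [_] => 1
  | a :: b :: t => piON E (b :: t) * E.Kfac a b

/-- `y` can be reached from `x` by a path of odd neighbors. -/
def ONReach (E : EGCM ι) (x y : ι) : Prop :=
  ∃ l : List ι, l.Chain' E.OddNeighborly ∧ l.head? = some x ∧ l.getLast? = some y

/-- The ON-connected component containing `x` is unital ON-cyclic: every ON-cycle
whose nodes lie in this component has `Π = 1`. -/
def UnitalONCyclicAt (E : EGCM ι) (x : ι) : Prop :=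
  ∀ l : List ι, l ≠ [] → l.Chain' E.OddNeighborly → (∀ y ∈ l, E.ONReach x y) →
    l.head? = l.getLast? → E.piON l = 1

/-- The E-GCM graph has an odd asymmetry: an odd-neighborly pair `i`, `j` with
`M i j ≠ M j i`. -/
def HasOddAsymmetry (E : EGCM ι) : Prop :=
  ∃ i j, E.OddNeighborly i j ∧ E.M i j ≠ E.M j i

end EGCM

section FullComm

variable {ι : Type*} [Fintype ι] {W : Type*} [Group W]

/-- An elementary simplification of commuting type: interchange adjacent letters
`x`, `y` with `m x y = 2`. -/
def CommMove (E : EGCM ι) (l l' : List ι) : Prop :=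
  ∃ (u v : List ι) (x y : ι), E.m x y = 2 ∧ l = u ++ x :: y :: v ∧ l' = u ++ y :: x :: v

/-- `w` is fully commutative: any reduced word for `w` can be obtained from any other
by a sequence of elementary simplifications of commuting type. -/
def FullyCommutative (E : EGCM ι) {W : Type*} [Group W] (cs : CoxeterSystem E.cox W)
    (w : W) : Prop :=
  ∀ l l' : List ι,
    cs.IsReduced l.reverse → cs.wordProd l.reverse = w →
    cs.IsReduced l'.reverse → cs.wordProd l'.reverse = w →
    Relation.ReflTransGen (CommMove E) l l'

end FullComm

/-- The Coxeter graph of a Coxeter matrix: an edge between `i ≠ j` iff `m i j ≠ 2`. -/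
def coxGraph {ι : Type*} (cm : CoxeterMatrix ι) : SimpleGraph ι where
  Adj i j := i ≠ j ∧ cm i j ≠ 2
  symm := by
    constructor
    intro i j ⟨h1, h2⟩
    exact ⟨h1.symm, by rwa [cm.symmetric j i]⟩
  loopless := by constructor; intro i ⟨h, _⟩; exact h rfl

/-- The E-GCM `E` has associated exponents given by the Coxeter matrix `cm`:
`M i j * M j i = 4 cos² (π / cm i j)` when `cm i j ≠ 0` and `M i j * M j i ≥ 4`
when `cm i j = 0` (representing `∞`), with `M i j = 0` iff `cm i j = 2`. -/
def Compat {ι : Type*} [Fintype ι] (E : EGCM ι) (cm : CoxeterMatrix ι) : Prop :=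
  ∀ i j : ι, i ≠ j →
    (E.M i j = 0 ↔ cm i j = 2) ∧
    ((cm i j = 0 ∧ 4 ≤ E.M i j * E.M j i) ∨
      (cm i j ≠ 0 ∧ E.M i j * E.M j i = 4 * Real.cos (Real.pi / (cm i j : ℝ)) ^ 2))

/-!
The number at node `k` after firing `s = [s₁, …, sₙ]` from `λ` is `⟨S s₁ ⋯ S sₙ (e k), λ⟩`,
where the reflections `S i` define the geometric representation of `W`. Positivity of roots then
says that firing from a dominant position only ever lengthens the group element, so legal
sequences from a `Jᶜ`-dominant position are reduced words of elements of `W^J`. In rank two,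
`S i` and `S j` act through the Chebyshev polynomials at `√(M i j M j i)`, and firing two adjacent
positive nodes alternately stays legal for `m i j` steps. As `W` is finite, `m i j < ∞`, and the
two alternating extensions of length `m i j` are reduced words of one element of `W^J` in which
`i` and `j` occur in different orders, which commutations cannot achieve.
-/

namespace Polynomial.Chebyshev

open Real

theorem S_eval_nonneg_of_two_le {c : ℝ} (hc : 2 ≤ c) {n : ℤ} (hn : -1 ≤ n) :
    0 ≤ (S ℝ n).eval c := by
  have key : ∀ k : ℕ, 0 ≤ (S ℝ ((k : ℤ) - 1)).eval c ∧
      (S ℝ ((k : ℤ) - 1)).eval c ≤ (S ℝ k).eval c := by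
    intro k
    induction k with
    | zero => simp
    | succ k ih =>
      have hrec := congrArg (eval c) (S_add_one ℝ (k : ℤ))
      simp only [eval_sub, eval_mul, eval_X] at hrec
      push_cast
      rw [add_sub_cancel_right, hrec]
      constructor <;> nlinarith
  obtain ⟨k, rfl⟩ : ∃ k : ℕ, n = (k : ℤ) - 1 := ⟨(n + 1).toNat, by omega⟩
  exact (key k).1

theorem S_eval_two_mul_cos_pi_div_nonneg {m : ℕ} (hm : 2 ≤ m) {n : ℤ} (hn : -1 ≤ n)
    (hnm : n < m) : 0 ≤ (S ℝ n).eval (2 * cos (π / m)) := by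
  have hm0 : (0 : ℝ) < m := by positivity
  have hsin : 0 < sin (π / m) := sin_pos_of_pos_of_lt_pi (by positivity)
    (div_lt_self pi_pos (by exact_mod_cast hm))
  refine nonneg_of_mul_nonneg_left ?_ hsin
  rw [S_two_mul_real_cos]
  apply sin_nonneg_of_nonneg_of_le_pi
  · have : (0 : ℝ) ≤ n + 1 := by exact_mod_cast (by omega : (0 : ℤ) ≤ n + 1)
    positivity
  · have : (n : ℝ) + 1 ≤ m := by exact_mod_cast (by omega : n + 1 ≤ (m : ℤ))
    calc ((n : ℝ) + 1) * (π / m) ≤ m * (π / m) := by gcongr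
      _ = π := by field_simp

theorem S_eval_two_mul_cos_pi_div_two_mul {m : ℕ} (hm : 2 ≤ m) :
    (S ℝ (2 * m)).eval (2 * cos (π / m)) = 1 ∧
      (S ℝ (2 * m - 1)).eval (2 * cos (π / m)) = 0 := by
  have hm0 : (m : ℝ) ≠ 0 := by positivity
  have hsin : sin (π / m) ≠ 0 := (sin_pos_of_pos_of_lt_pi (by positivity)
    (div_lt_self pi_pos (by exact_mod_cast hm))).ne'
  have h1 := S_two_mul_real_cos (π / m) (2 * m)
  have h2 := S_two_mul_real_cos (π / m) (2 * m - 1)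
  push_cast at h1 h2
  rw [show (2 * (m : ℝ) + 1) * (π / m) = π / m + (1 : ℕ) * (2 * π) by field_simp; ring,
    sin_add_nat_mul_two_pi] at h1
  rw [show (2 * (m : ℝ) - 1 + 1) * (π / m) = 2 * π by field_simp; ring, sin_two_pi] at h2
  exact ⟨(mul_eq_right₀ hsin).1 h1, (mul_eq_zero.1 h2).resolve_right hsin⟩

end Polynomial.Chebyshev

theorem mul_pow_mul_mul_pow_eq_one {G : Type*} [Monoid G] {a b : G} (ha : a * a = 1)
    (hb : b * b = 1) (n : ℕ) : (a * b) ^ n * (b * a) ^ n = 1 := by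
  induction n with
  | zero => simp
  | succ n ih =>
    rw [pow_succ, pow_succ', mul_assoc, ← mul_assoc (a * b), mul_assoc a, ← mul_assoc b, hb,
      one_mul, ha, one_mul, ih]

namespace CoxeterSystem

variable {B : Type*} {M : CoxeterMatrix B} {W : Type*} [Group W] (cs : CoxeterSystem M W)

theorem prod_map_alternatingWord_two_mul {G : Type*} [Monoid G] (f : B → G) (i j : B) (k : ℕ) :
    ((alternatingWord i j (2 * k)).map f).prod = (f i * f j) ^ k := by
  induction k with
  | zero => simp [alternatingWord]
  | succ k ih =>
    have hodd : ¬Even (2 * k + 1) := by simp [parity_simps]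
    rw [show 2 * (k + 1) = 2 * k + 1 + 1 by ring, alternatingWord_succ', alternatingWord_succ',
      if_neg hodd, if_pos (even_two_mul k)]
    simp only [List.map_cons, List.prod_cons, ih, pow_succ', mul_assoc]

/-- By the braid relation the alternating word can be rewritten to end in `s i`. -/
theorem length_mul_simple_lt_of_eq_mul_braidWord {z w : W} {i j : B} (hM : M i j ≠ 0)
    (hw : w = z * cs.wordProd (alternatingWord i j (M i j)))
    (hlen : cs.length z + M i j = cs.length w) :
    cs.length (w * cs.simple i) < cs.length w := by
  obtain ⟨k, hk⟩ : ∃ k, M i j = k + 1 := ⟨M i j - 1, by omega⟩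
  have hbraid := cs.wordProd_braidWord_eq i j
  rw [braidWord, braidWord, M.symmetric j i, hk, alternatingWord_succ j i, wordProd_concat]
    at hbraid
  rw [hk] at hw hlen
  have hws : w * cs.simple i = z * cs.wordProd (alternatingWord i j k) := by
    rw [hw, hbraid, ← mul_assoc, simple_mul_simple_cancel_right]
  rw [hws]
  calc cs.length (z * cs.wordProd (alternatingWord i j k))
      ≤ cs.length z + (alternatingWord i j k).length :=
        (cs.length_mul_le _ _).trans (Nat.add_le_add_left (cs.length_wordProd_le _) _)
    _ < cs.length w := by rw [length_alternatingWord]; omega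

theorem exists_eq_mul_alternatingWord {w : W} {i j : B}
    (hi : cs.length w < cs.length (w * cs.simple i))
    (hj : cs.length (w * cs.simple j) < cs.length w) :
    ∃ z r, w = z * cs.wordProd (alternatingWord i j r) ∧ cs.length z + r = cs.length w ∧
      0 < r ∧ (M i j = 0 ∨ r < M i j) ∧
      cs.length z < cs.length (z * cs.simple i) ∧ cs.length z < cs.length (z * cs.simple j) := by
  induction hn : cs.length w using Nat.strong_induction_on generalizing w i j with
  | _ n ih =>
  subst hn
  have hij : i ≠ j := by rintro rfl; omega
  have hw' : cs.length (w * cs.simple j) + 1 = cs.length w := by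
    rcases cs.length_mul_simple w j with h | h <;> omega
  set w' := w * cs.simple j
  have hw : w = w' * cs.simple j := by simp [w']
  -- Strip `s j`; if `s i` is then a descent, recurse with the roles of `i` and `j` swapped.
  rcases cs.length_mul_simple w' i with hi' | hi'
  · refine ⟨w', 1, by simpa [alternatingWord] using hw, hw', one_pos, ?_, by omega,
      by rw [← hw]; omega⟩
    have := M.off_diagonal i j hij
    omega
  · obtain ⟨z, r, hz, hlen, -, hbound, hzj, hzi⟩ :=
      ih (cs.length w') (by omega) (i := j) (j := i) (by rw [← hw]; omega) (by omega) rfl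
    have hzw : w = z * cs.wordProd (alternatingWord i j (r + 1)) := by
      rw [hw, hz, alternatingWord_succ, wordProd_concat, mul_assoc]
    refine ⟨z, r + 1, hzw, by omega, by omega, ?_, hzi, hzj⟩
    rw [M.symmetric j i] at hbound
    rcases hbound with h | h
    · exact Or.inl h
    · refine Or.inr (lt_of_le_of_ne h fun hr => ?_)
      have := cs.length_mul_simple_lt_of_eq_mul_braidWord (by omega) (hr ▸ hzw) (by omega)
      omega

end CoxeterSystem

namespace EGCM

open Real CoxeterSystem Polynomial

theorem JcDominant.nonneg {ι : Type*} {J : Set ι} {μ : ι → ℝ} (h : JcDominant J μ) :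
    0 ≤ μ := fun i => by
  by_cases hi : i ∈ J
  · exact (h.1 i hi).ge
  · exact (h.2 i hi).le

variable {ι : Type*} [Fintype ι] (E : EGCM ι)

theorem m_self (i : ι) : E.m i i = 1 := by
  simp [m]

theorem two_le_m {i j : ι} (hij : i ≠ j) (h : E.m i j ≠ 0) : 2 ≤ E.m i j := by
  classical
  unfold m at h ⊢
  rw [if_neg hij] at h ⊢
  split_ifs at h ⊢ with hex
  exacts [(Nat.find_spec hex).1, absurd rfl h]

theorem M_mul_M_eq_of_m_ne_zero {i j : ι} (hij : i ≠ j) (h : E.m i j ≠ 0) :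
    E.M i j * E.M j i = 4 * cos (π / E.m i j) ^ 2 := by
  classical
  unfold m at h ⊢
  rw [if_neg hij] at h ⊢
  split_ifs at h ⊢ with hex
  exacts [(Nat.find_spec hex).2, absurd rfl h]

theorem four_le_M_mul_M_of_m_eq_zero {i j : ι} (hij : i ≠ j) (h : E.m i j = 0) :
    4 ≤ E.M i j * E.M j i := by
  classical
  unfold m at h
  rw [if_neg hij] at h
  split_ifs at h with hex
  · have := (Nat.find_spec hex).1
    omega
  have hM : E.M i j ≠ 0 := fun hM => hex ⟨2, le_rfl, by simp [hM]⟩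
  have hM' : E.M j i ≠ 0 := fun hM' => hM ((E.zero_iff i j).2 hM')
  rcases E.prod_cond i j hij (mul_ne_zero hM hM') with h4 | ⟨k, hk, hcos⟩
  · exact h4
  · exact absurd ⟨k, by omega, hcos⟩ hex

theorem m_ne_two_of_adj {i j : ι} (h : E.Adj i j) : E.m i j ≠ 2 := by
  intro h2
  have hM' : E.M j i ≠ 0 := fun hM' => h.2 ((E.zero_iff i j).2 hM')
  have := E.M_mul_M_eq_of_m_ne_zero h.1 (by omega)
  rw [h2] at this
  exact mul_ne_zero h.2 hM' (by rw [this]; norm_num)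

theorem M_mul_M_lt_four {i j : ι} (hij : i ≠ j) (h : E.m i j ≠ 0) : E.M i j * E.M j i < 4 := by
  have hsin : 0 < sin (π / E.m i j) := sin_pos_of_pos_of_lt_pi (by positivity)
    (div_lt_self pi_pos (by exact_mod_cast E.two_le_m hij h))
  nlinarith [sin_sq_add_cos_sq (π / E.m i j), E.M_mul_M_eq_of_m_ne_zero hij h]

theorem M_mul_M_nonneg (i j : ι) : 0 ≤ E.M i j * E.M j i := by
  rcases eq_or_ne i j with rfl | hij
  · exact mul_self_nonneg _
  · exact mul_nonneg_of_nonpos_of_nonpos (E.offDiag_nonpos i j hij) (E.offDiag_nonpos j i hij.symm)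

/-- The rank-two parameter: it plays the role of `2 cos (π / m i j)`, also when `m i j = ∞`. -/
noncomputable def bond (i j : ι) : ℝ := √(E.M i j * E.M j i)

theorem bond_mul_self (i j : ι) : E.bond i j * E.bond i j = E.M i j * E.M j i :=
  mul_self_sqrt (E.M_mul_M_nonneg i j)

theorem bond_eq_two_mul_cos {i j : ι} (hij : i ≠ j) (h : E.m i j ≠ 0) :
    E.bond i j = 2 * cos (π / E.m i j) := by
  have hm0 : (0 : ℝ) < E.m i j := by positivity
  have hcos : 0 ≤ cos (π / E.m i j) := cos_nonneg_of_neg_pi_div_two_le_of_le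
    (by linarith [div_pos pi_pos hm0, pi_pos])
    (div_le_div_of_nonneg_left pi_pos.le two_pos (by exact_mod_cast E.two_le_m hij h))
  rw [bond, E.M_mul_M_eq_of_m_ne_zero hij h,
    show 4 * cos (π / E.m i j) ^ 2 = (2 * cos (π / E.m i j)) ^ 2 by ring, sqrt_sq (by positivity)]

theorem two_le_bond {i j : ι} (hij : i ≠ j) (h : E.m i j = 0) : 2 ≤ E.bond i j :=
  le_sqrt_of_sq_le (by linarith [E.four_le_M_mul_M_of_m_eq_zero hij h])

theorem neg_M_div_bond_mul_bond (i j : ι) : -E.M j i / E.bond i j * E.bond i j = -E.M j i := by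
  rcases eq_or_ne (E.bond i j) 0 with hc | hc
  · have h0 := E.bond_mul_self i j
    rw [hc, zero_mul, eq_comm, mul_eq_zero] at h0
    rcases h0 with h0 | h0
    · simp [(E.zero_iff i j).1 h0]
    · simp [h0]
  · exact div_mul_cancel₀ _ hc

theorem neg_M_mul_neg_M_div_bond (i j : ι) :
    -E.M i j * (-E.M j i / E.bond i j) = E.bond i j := by
  rcases eq_or_ne (E.bond i j) 0 with hc | hc
  · simp [hc]
  · rw [← mul_div_assoc, neg_mul_neg, ← E.bond_mul_self, mul_self_div_self]

theorem S_eval_bond_nonneg {i j : ι} (hij : i ≠ j) {n : ℤ} (hn : -1 ≤ n)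
    (h : E.m i j = 0 ∨ n < E.m i j) : 0 ≤ (Chebyshev.S ℝ n).eval (E.bond i j) := by
  by_cases hm : E.m i j = 0
  · exact Chebyshev.S_eval_nonneg_of_two_le (E.two_le_bond hij hm) hn
  · rw [E.bond_eq_two_mul_cos hij hm]
    exact Chebyshev.S_eval_two_mul_cos_pi_div_nonneg (E.two_le_m hij hm) hn (h.resolve_left hm)

theorem legal_append {μ : ι → ℝ} {s t : List ι} :
    E.Legal μ (s ++ t) ↔ E.Legal μ s ∧ E.Legal (E.fireList μ s) t := by
  induction s generalizing μ with
  | nil => simp [Legal, fireList]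
  | cons a s ih => simp only [List.cons_append, Legal, fireList, ih, and_assoc]

theorem legal_append_singleton {μ : ι → ℝ} {s : List ι} {t : ι} :
    E.Legal μ (s ++ [t]) ↔ E.Legal μ s ∧ 0 < E.fireList μ s t := by
  simp [legal_append, Legal]

theorem fire_eq_self_of_eq_zero {μ : ι → ℝ} {i : ι} (h : μ i = 0) : E.fire μ i = μ := by
  ext; simp [fire, h]

variable [DecidableEq ι]

theorem S_apply (i : ι) (v : ι → ℝ) : E.S i v = v - (E.M i ⬝ᵥ v) • Pi.single i 1 := by
  simp [S, dotProduct]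

theorem S_single (i k : ι) :
    E.S i (Pi.single k 1) = Pi.single k 1 - E.M i k • Pi.single i 1 := by
  rw [S_apply, dotProduct_single, mul_one]

theorem S_single_self (i : ι) : E.S i (Pi.single i 1) = -Pi.single i 1 := by
  rw [S_single, E.diag]
  module

theorem S_mul_self (i : ι) : E.S i * E.S i = 1 := by
  refine LinearMap.ext fun v => ?_
  rw [Module.End.mul_apply, S_apply E i v, map_sub, map_smul, S_apply, S_single_self]
  simp only [Module.End.one_apply]
  module

theorem S_dotProduct (i : ι) (v μ : ι → ℝ) : E.S i v ⬝ᵥ μ = v ⬝ᵥ E.fire μ i := by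
  have : E.fire μ i = μ - μ i • E.M i := by ext; simp [fire, mul_comm]
  simp only [S_apply, this, sub_dotProduct, dotProduct_sub, smul_dotProduct, dotProduct_smul,
    single_dotProduct, smul_eq_mul, one_mul]
  rw [dotProduct_comm (E.M i) v]
  ring

theorem prod_map_S_reverse_mul (s : List ι) :
    (s.reverse.map E.S).prod * (s.map E.S).prod = 1 := by
  induction s with
  | nil => simp
  | cons t s ih =>
    simp only [List.reverse_cons, List.map_append, List.prod_append, List.map_cons, List.map_nil,
      List.prod_cons, List.prod_nil, mul_one]
    rw [mul_assoc, ← mul_assoc (E.S t), S_mul_self, one_mul, ih]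

/-- When `m i j = 2` the factor `-M j i / bond i j` is `0 / 0 = 0`, which is still correct. -/
theorem prod_map_S_alternatingWord_single (i j : ι) (r : ℕ) :
    ((alternatingWord i j r).map E.S).prod (Pi.single i 1) =
      (if Even r then (Chebyshev.S ℝ r).eval (E.bond i j)
        else (Chebyshev.S ℝ (r - 1)).eval (E.bond i j)) • Pi.single i 1 +
      (-E.M j i / E.bond i j * if Even r then (Chebyshev.S ℝ (r - 1)).eval (E.bond i j)
        else (Chebyshev.S ℝ r).eval (E.bond i j)) • Pi.single j 1 := by
  induction r with
  | zero => simp [alternatingWord]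
  | succ r ih =>
    have hrec := congrArg (eval (E.bond i j)) (Chebyshev.S_add_one ℝ (r : ℤ))
    simp only [eval_sub, eval_mul, eval_X] at hrec
    rw [alternatingWord_succ', List.map_cons, List.prod_cons, Module.End.mul_apply, ih]
    push_cast
    rw [add_sub_cancel_right]
    rcases Nat.even_or_odd r with hr | hr
    · have hr' : ¬Even (r + 1) := by simpa [Nat.even_add_one] using hr
      simp only [if_pos hr, if_neg hr', map_add, map_smul, S_single, E.diag, hrec]
      linear_combination (norm := module)
        -(Chebyshev.S ℝ r).eval (E.bond i j) • E.neg_M_div_bond_mul_bond i j • Pi.single j 1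
    · have hr' : Even (r + 1) := by simpa [Nat.even_add_one] using hr
      have hr : ¬Even r := Nat.not_even_iff_odd.2 hr
      simp only [if_neg hr, if_pos hr', map_add, map_smul, S_single, E.diag, hrec]
      linear_combination (norm := module)
        (Chebyshev.S ℝ r).eval (E.bond i j) • E.neg_M_mul_neg_M_div_bond i j • Pi.single i 1

theorem exists_prod_map_S_alternatingWord_single {i j : ι} (hij : i ≠ j) {r : ℕ}
    (hr : E.m i j = 0 ∨ r < E.m i j) :
    ∃ A B : ℝ, 0 ≤ A ∧ 0 ≤ B ∧
      ((alternatingWord i j r).map E.S).prod (Pi.single i 1) =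
        A • Pi.single i 1 + B • Pi.single j 1 := by
  have hS : ∀ n : ℤ, -1 ≤ n → n ≤ r → 0 ≤ (Chebyshev.S ℝ n).eval (E.bond i j) :=
    fun n h1 h2 => E.S_eval_bond_nonneg hij h1 (by omega)
  have hq : 0 ≤ -E.M j i / E.bond i j :=
    div_nonneg (neg_nonneg.2 (E.offDiag_nonpos j i hij.symm)) (sqrt_nonneg _)
  refine ⟨_, _, ?_, ?_, E.prod_map_S_alternatingWord_single i j r⟩
  · split_ifs <;> exact hS _ (by omega) (by omega)
  · exact mul_nonneg hq (by split_ifs <;> exact hS _ (by omega) (by omega))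

theorem S_mul_S_pow_m_apply_single {i j : ι} (hij : i ≠ j) (h : E.m i j ≠ 0) :
    ((E.S i * E.S j) ^ E.m i j) (Pi.single i 1) = Pi.single i 1 := by
  obtain ⟨h1, h0⟩ := Chebyshev.S_eval_two_mul_cos_pi_div_two_mul (E.two_le_m hij h)
  rw [← prod_map_alternatingWord_two_mul, prod_map_S_alternatingWord_single,
    if_pos (even_two_mul _), E.bond_eq_two_mul_cos hij h]
  push_cast
  simp [h1, h0]

/-- When `M i j M j i ≠ 4` every vector is a combination of `e i`, `e j` and a vector fixed by
`S i` and `S j`. -/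
theorem eq_one_of_apply_single {i j : ι} (hD : E.M i j * E.M j i ≠ 4)
    {T : Module.End ℝ (ι → ℝ)} (hT : T ∈ Submonoid.closure {E.S i, E.S j})
    (hi : T (Pi.single i 1) = Pi.single i 1) (hj : T (Pi.single j 1) = Pi.single j 1) :
    T = 1 := by
  refine LinearMap.ext fun v => ?_
  have hD' : 4 - E.M i j * E.M j i ≠ 0 := sub_ne_zero.2 (Ne.symm hD)
  set a := (2 * (E.M i ⬝ᵥ v) - E.M i j * (E.M j ⬝ᵥ v)) / (4 - E.M i j * E.M j i)
  set b := (2 * (E.M j ⬝ᵥ v) - E.M j i * (E.M i ⬝ᵥ v)) / (4 - E.M i j * E.M j i)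
  set u := v - a • Pi.single i 1 - b • Pi.single j 1
  have hu : ∀ k ∈ ({E.S i, E.S j} : Set (Module.End ℝ (ι → ℝ))), k u = u := by
    have hiu : E.M i ⬝ᵥ u = 0 := by
      simp only [u, dotProduct_sub, dotProduct_smul, dotProduct_single, E.diag, smul_eq_mul,
        mul_one, a, b]
      field_simp
      ring
    have hju : E.M j ⬝ᵥ u = 0 := by
      simp only [u, dotProduct_sub, dotProduct_smul, dotProduct_single, E.diag, smul_eq_mul,
        mul_one, a, b]
      field_simp
      ring
    rintro k (rfl | rfl) <;> simp [S_apply, hiu, hju]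
  have hTu : ∀ T' ∈ Submonoid.closure {E.S i, E.S j}, T' u = u := fun T' hT' => by
    induction hT' using Submonoid.closure_induction with
    | mem k hk => exact hu k hk
    | one => rfl
    | mul k l _ _ hk hl => rw [Module.End.mul_apply, hl, hk]
  have hv : v = u + a • Pi.single i 1 + b • Pi.single j 1 := by simp only [u]; abel
  rw [hv, map_add, map_add, map_smul, map_smul, hTu T hT, hi, hj, Module.End.one_apply]

theorem S_mul_S_pow_m (i j : ι) : (E.S i * E.S j) ^ E.m i j = 1 := by
  rcases eq_or_ne i j with rfl | hij
  · rw [m_self, pow_one, S_mul_self]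
  rcases eq_or_ne (E.m i j) 0 with h | h
  · rw [h, pow_zero]
  have hmem : ∀ k l, k ∈ ({E.S i, E.S j} : Set _) → l ∈ ({E.S i, E.S j} : Set _) →
      (k * l) ^ E.m i j ∈ Submonoid.closure {E.S i, E.S j} := fun k l hk hl =>
    pow_mem (mul_mem (Submonoid.subset_closure hk) (Submonoid.subset_closure hl)) _
  refine E.eq_one_of_apply_single (E.M_mul_M_lt_four hij h).ne
    (hmem _ _ (by simp) (by simp)) (E.S_mul_S_pow_m_apply_single hij h) ?_
  have hji := E.S_mul_S_pow_m_apply_single hij.symm (by rwa [m_symm])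
  rw [m_symm] at hji
  conv_lhs => rw [← hji, ← Module.End.mul_apply,
    mul_pow_mul_mul_pow_eq_one (E.S_mul_self i) (E.S_mul_self j)]
  rfl

theorem isLiftable_S : E.cox.IsLiftable E.S :=
  E.S_mul_S_pow_m

theorem fireList_apply (μ : ι → ℝ) (s : List ι) (k : ι) :
    E.fireList μ s k = (s.map E.S).prod (Pi.single k 1) ⬝ᵥ μ := by
  induction s generalizing μ with
  | nil => simp [fireList]
  | cons t s ih =>
    rw [fireList, ih, List.map_cons, List.prod_cons, Module.End.mul_apply, S_dotProduct]

/-- Each fired number pairs `μ` with a nonzero nonnegative combination of `e i` and `e j`. -/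
theorem legal_alternatingWord {μ : ι → ℝ} {i j : ι} (hij : i ≠ j) (hi : 0 < μ i) (hj : 0 < μ j)
    {K : ℕ} (hK : E.m i j = 0 ∨ K ≤ E.m i j) : E.Legal μ (alternatingWord i j K) := by
  induction K generalizing i j with
  | zero => trivial
  | succ K ih =>
    rw [alternatingWord_succ, List.concat_eq_append, legal_append_singleton, fireList_apply]
    rw [m_symm] at hK
    refine ⟨ih hij.symm hj hi (by omega), ?_⟩
    obtain ⟨A, B, hA, hB, hAB⟩ :=
      E.exists_prod_map_S_alternatingWord_single hij.symm (by omega : E.m j i = 0 ∨ K < E.m j i)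
    have hne : ((alternatingWord j i K).map E.S).prod (Pi.single j 1) ≠ 0 := fun h0 => by
      have := congrArg ((((alternatingWord j i K).reverse).map E.S).prod) h0
      rw [← Module.End.mul_apply, prod_map_S_reverse_mul, map_zero] at this
      simp at this
    rw [hAB] at hne ⊢
    simp only [add_dotProduct, smul_dotProduct, single_dotProduct, one_mul, smul_eq_mul]
    rcases hA.lt_or_eq with hA | rfl
    · positivity
    rcases hB.lt_or_eq with hB | rfl
    · positivity
    simp at hne

theorem filter_eq_of_commMove {x y : ι} (hxy : E.m x y ≠ 2) {l l' : List ι}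
    (h : CommMove E l l') :
    l.filter (fun t => t = x ∨ t = y) = l'.filter (fun t => t = x ∨ t = y) := by
  obtain ⟨u, v, c, d, hcd, rfl, rfl⟩ := h
  have hxy' : E.m y x ≠ 2 := by rwa [m_symm]
  have : ¬((c = x ∨ c = y) ∧ (d = x ∨ d = y)) := by
    rintro ⟨hc | hc, hd | hd⟩ <;> subst hc hd <;> simp_all [m_self]
  by_cases hc : c = x ∨ c = y <;> by_cases hd : d = x ∨ d = y <;>
    simp_all [List.filter_append]

theorem filter_eq_of_reflTransGen_commMove {x y : ι} (hxy : E.m x y ≠ 2) {l l' : List ι}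
    (h : Relation.ReflTransGen (CommMove E) l l') :
    l.filter (fun t => t = x ∨ t = y) = l'.filter (fun t => t = x ∨ t = y) := by
  induction h with
  | refl => rfl
  | tail _ hstep ih => rw [ih, E.filter_eq_of_commMove hxy hstep]

section GeometricRepresentation

variable {W : Type*} [Group W] (cs : CoxeterSystem E.cox W)

noncomputable def geomRep : W →* Module.End ℝ (ι → ℝ) :=
  cs.lift ⟨E.S, E.isLiftable_S⟩

theorem geomRep_simple (i : ι) : E.geomRep cs (cs.simple i) = E.S i :=
  cs.lift_apply_simple E.isLiftable_S i

theorem geomRep_wordProd (s : List ι) : E.geomRep cs (cs.wordProd s) = (s.map E.S).prod := by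
  rw [wordProd, map_list_prod, List.map_map]
  congr 2
  ext1 i
  exact E.geomRep_simple cs i

/-- Induction on `ℓ w`: split off a maximal alternating suffix in `s i` and a right descent
`s j`, to which the rank-two computation applies. -/
theorem geomRep_single_nonneg {w : W} {i : ι} (h : cs.length w < cs.length (w * cs.simple i)) :
    0 ≤ E.geomRep cs w (Pi.single i 1) := by
  induction hn : cs.length w using Nat.strong_induction_on generalizing w i with
  | _ n ih =>
  subst hn
  rcases eq_or_ne w 1 with rfl | hw
  · simp
  obtain ⟨j, hj⟩ := cs.exists_rightDescent_of_ne_one hw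
  obtain ⟨z, r, rfl, hlen, hr, hbound, hzi, hzj⟩ := cs.exists_eq_mul_alternatingWord h hj
  have hij : i ≠ j := by rintro rfl; exact lt_asymm h hj
  obtain ⟨A, B, hA, hB, hAB⟩ := E.exists_prod_map_S_alternatingWord_single hij hbound
  rw [map_mul, Module.End.mul_apply, geomRep_wordProd, hAB, map_add, map_smul, map_smul]
  exact add_nonneg (smul_nonneg hA (ih _ (by omega) hzi rfl))
    (smul_nonneg hB (ih _ (by omega) hzj rfl))

theorem geomRep_single_nonpos {w : W} {i : ι} (h : cs.length (w * cs.simple i) < cs.length w) :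
    E.geomRep cs w (Pi.single i 1) ≤ 0 := by
  have hw : w = w * cs.simple i * cs.simple i := by simp
  have := E.geomRep_single_nonneg cs (w := w * cs.simple i) (i := i) (by rwa [← hw])
  rw [hw, map_mul, Module.End.mul_apply, geomRep_simple, S_single_self, map_neg]
  exact neg_nonpos.2 this

theorem fireList_eq_geomRep (μ : ι → ℝ) (s : List ι) (k : ι) :
    E.fireList μ s k = E.geomRep cs (cs.wordProd s) (Pi.single k 1) ⬝ᵥ μ := by
  rw [fireList_apply, geomRep_wordProd]

theorem length_lt_length_mul_simple_of_pos {μ : ι → ℝ} (hμ : 0 ≤ μ) {w : W} {t : ι}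
    (h : 0 < E.geomRep cs w (Pi.single t 1) ⬝ᵥ μ) :
    cs.length w < cs.length (w * cs.simple t) := by
  by_contra! hle
  have hlt : cs.length (w * cs.simple t) < cs.length w :=
    lt_of_le_of_ne hle (cs.length_mul_simple_ne w t)
  have := dotProduct_nonneg_of_nonneg (neg_nonneg.2 (E.geomRep_single_nonpos cs hlt)) hμ
  rw [neg_dotProduct] at this
  linarith

theorem length_lt_length_mul_simple_of_legal_append_singleton {μ : ι → ℝ} (hμ : 0 ≤ μ) {s : List ι}
    {t : ι} (h : E.Legal μ (s ++ [t])) :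
    cs.length (cs.wordProd s) < cs.length (cs.wordProd s * cs.simple t) := by
  refine E.length_lt_length_mul_simple_of_pos cs hμ ?_
  rw [← fireList_eq_geomRep]
  exact (E.legal_append_singleton.1 h).2

theorem isReduced_of_legal {μ : ι → ℝ} (hμ : 0 ≤ μ) {s : List ι} (hs : E.Legal μ s) :
    cs.IsReduced s := by
  induction s using List.reverseRecOn with
  | nil => simp [CoxeterSystem.IsReduced]
  | append_singleton s t ih =>
    have hlt := E.length_lt_length_mul_simple_of_legal_append_singleton cs hμ hs
    have hred : cs.length (cs.wordProd s) = s.length := ih (E.legal_append_singleton.1 hs).1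
    rcases cs.length_mul_simple (cs.wordProd s) t with h | h
    · simp [CoxeterSystem.IsReduced, wordProd_append, h, hred]
    · omega

/-- `S j` is dual to firing `j`, which does not move `λ` when `λ j = 0`. -/
theorem length_lt_length_simple_mul_of_legal {μ : ι → ℝ} (hμ : 0 ≤ μ) {j : ι} (hj : μ j = 0)
    {s : List ι} (hs : E.Legal μ s) :
    cs.length (cs.wordProd s) < cs.length (cs.simple j * cs.wordProd s) := by
  induction s using List.reverseRecOn with
  | nil => simp
  | append_singleton s t ih =>
    have ht := E.length_lt_length_mul_simple_of_legal_append_singleton cs hμ hs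
    have hjs := ih (E.legal_append_singleton.1 hs).1
    have hjt : cs.length (cs.simple j * cs.wordProd s) <
        cs.length (cs.simple j * cs.wordProd s * cs.simple t) := by
      refine E.length_lt_length_mul_simple_of_pos cs hμ ?_
      rw [map_mul, Module.End.mul_apply, geomRep_simple, S_dotProduct, E.fire_eq_self_of_eq_zero hj,
        ← fireList_eq_geomRep]
      exact (E.legal_append_singleton.1 hs).2
    rw [wordProd_append, wordProd_singleton, ← mul_assoc]
    rcases cs.length_mul_simple (cs.wordProd s) t with h | h <;>
    rcases cs.length_simple_mul (cs.wordProd s) j with h' | h' <;>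
    rcases cs.length_mul_simple (cs.simple j * cs.wordProd s) t with h'' | h'' <;> omega

theorem wordProd_reverse_mem_minReps {J : Set ι} {μ : ι → ℝ} (hμ : JcDominant J μ) {s : List ι}
    (hs : E.Legal μ s) : cs.wordProd s.reverse ∈ minReps cs J := by
  intro j hj
  rw [wordProd_reverse, ← cs.inv_simple j, ← mul_inv_rev, length_inv, length_inv]
  exact E.length_lt_length_simple_mul_of_legal cs hμ.nonneg (hμ.1 j hj) hs

theorem exists_not_fullyCommutative {J : Set ι} {μ : ι → ℝ} (hμ : JcDominant J μ) {s : List ι}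
    (hs : E.Legal μ s) {x y : ι} (hxy : E.Adj x y) (hx : 0 < E.fireList μ s x)
    (hy : 0 < E.fireList μ s y) (hm : E.m x y ≠ 0) :
    ∃ w ∈ minReps cs J, ¬FullyCommutative E cs w := by
  have hl₁ : E.Legal μ (s ++ alternatingWord x y (E.m x y)) :=
    E.legal_append.2 ⟨hs, E.legal_alternatingWord hxy.1 hx hy (Or.inr le_rfl)⟩
  have hl₂ : E.Legal μ (s ++ alternatingWord y x (E.m x y)) :=
    E.legal_append.2 ⟨hs, E.legal_alternatingWord hxy.1.symm hy hx (Or.inr (E.m_symm x y).le)⟩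
  have hprod : cs.wordProd (s ++ alternatingWord y x (E.m x y)).reverse =
      cs.wordProd (s ++ alternatingWord x y (E.m x y)).reverse := by
    have hbraid := cs.wordProd_braidWord_eq x y
    change cs.wordProd (alternatingWord x y (E.m x y)) =
      cs.wordProd (alternatingWord y x (E.m y x)) at hbraid
    rw [wordProd_reverse, wordProd_reverse, wordProd_append, wordProd_append, hbraid, m_symm]
  refine ⟨_, E.wordProd_reverse_mem_minReps cs hμ hl₁, fun hfc => ?_⟩
  have hfilter := E.filter_eq_of_reflTransGen_commMove (E.m_ne_two_of_adj hxy)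
    (hfc _ _ (E.isReduced_of_legal cs hμ.nonneg hl₁).reverse rfl
      (E.isReduced_of_legal cs hμ.nonneg hl₂).reverse hprod)
  obtain ⟨k, hk⟩ : ∃ k, E.m x y = k + 1 := ⟨E.m x y - 1, by omega⟩
  rw [hk, alternatingWord_succ, alternatingWord_succ] at hfilter
  exact hxy.1 (by simpa [List.filter_append, eq_comm] using congrArg List.getLast? hfilter)

end GeometricRepresentation

/-- Otherwise alternating firings would give reduced words of every length. -/
theorem m_ne_zero_of_legal {W : Type*} [Group W] [Finite W] (cs : CoxeterSystem E.cox W)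
    {μ : ι → ℝ} (hμ : 0 ≤ μ) {s : List ι} (hs : E.Legal μ s) {x y : ι} (hxy : x ≠ y)
    (hx : 0 < E.fireList μ s x) (hy : 0 < E.fireList μ s y) : E.m x y ≠ 0 := by
  intro hm
  have hlen : ∀ K, cs.length (cs.wordProd (s ++ alternatingWord x y K)) = s.length + K :=
    fun K => by
      rw [E.isReduced_of_legal cs hμ
        (E.legal_append.2 ⟨hs, E.legal_alternatingWord hxy hx hy (Or.inl hm)⟩)]
      simp
  refine not_injective_infinite_finite (fun K => cs.wordProd (s ++ alternatingWord x y K)) ?_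
  intro K K' h
  have := congrArg cs.length h
  simp only [hlen] at this
  omega

end EGCM

/-- **Proposition 4.2 (2).** If `W` is finite and every element of `W^J` is fully
commutative, then every `Jᶜ`-dominant position is adjacency-free. -/
theorem egcm_fullyCommutative_implies_adjacencyFree {ι : Type*} [Fintype ι]
    (E : EGCM ι) {W : Type*} [Group W] [Finite W] (cs : CoxeterSystem E.cox W)
    (J : Set ι) (hfc : ∀ w ∈ minReps cs J, FullyCommutative E cs w) :
    ∀ lam : ι → ℝ, EGCM.JcDominant J lam → E.AdjacencyFree lam := by
  classical
  rintro lam hlam s hs ⟨x, y, hxy, hx, hy⟩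
  obtain ⟨w, hw, hnfc⟩ := E.exists_not_fullyCommutative cs hlam hs hxy hx hy
    (E.m_ne_zero_of_legal cs hlam.nonneg hs hxy.1 hx hy)
  exact hnfc (hfc w hw)
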